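/- arXiv:1901.00586 — 7 statements merged into one kernel-verified Lean document; each statement's English description precedes it below -/
import Mathlib

section
/- In the SED game: for every defender strategy x ∈ [0,1]^W and every feasible attacker strategy (y,e), there exists a feasible attacker strategy (y',e') such that f(x,e') ≥ f(x,e) and the set {w ∈ W : 0 < e'_w < t_w^all} has at most one element. (Consequently, any optimal attacker solution can be replaced by one in which at most one website receives a partial scanning effort, i.e. Theorem 2 of the paper.) -/
open Finset

/-- Feasibility of an (integral) attacker strategy `(y, e)` in the SED game:
`y ∈ {0,1}^W`, `e ≥ 0`, effort budget `Bₑ`, attack budget `Bₐ`, and `e_w ≤ t_w^all · y_w`. -/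
def AttFeas {W : Type*} [Fintype W] (tall pii : W → ℝ) (Ba Be : ℝ) (y e : W → ℝ) : Prop :=
  (∀ w, y w = 0 ∨ y w = 1) ∧ (∀ w, 0 ≤ e w) ∧
    (∑ w, e w ≤ Be) ∧ (∑ w, pii w * y w ≤ Ba) ∧ ∀ w, e w ≤ tall w * y w

/-- Feasibility for the fractional relaxation: `y ∈ [0,1]^W`. -/
def FracFeas {W : Type*} [Fintype W] (tall pii : W → ℝ) (Ba Be : ℝ) (y e : W → ℝ) : Prop :=
  (∀ w, y w ∈ Set.Icc (0:ℝ) 1) ∧ (∀ w, 0 ≤ e w) ∧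
    (∑ w, e w ≤ Be) ∧ (∑ w, pii w * y w ≤ Ba) ∧ ∀ w, e w ≤ tall w * y w

/-- Payoff `f(x,e) = ∑_w κ_w (1 - x_w) e_w`, where `κ_w = t_w / t_w^all`. -/
noncomputable def payoff {W : Type*} [Fintype W] (t tall x e : W → ℝ) : ℝ :=
  ∑ w, (t w / tall w) * (1 - x w) * e w

/-- `IntVal x`: the attacker's optimal value against defender strategy `x`. -/
noncomputable def IntVal {W : Type*} [Fintype W] (t tall pii : W → ℝ) (Ba Be : ℝ)
    (x : W → ℝ) : ℝ :=
  sSup {v | ∃ y e, AttFeas tall pii Ba Be y e ∧ v = payoff t tall x e}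

/-- `FracVal x`: the attacker's optimal value in the fractional relaxation. -/
noncomputable def FracVal {W : Type*} [Fintype W] (t tall pii : W → ℝ) (Ba Be : ℝ)
    (x : W → ℝ) : ℝ :=
  sSup {v | ∃ y e, FracFeas tall pii Ba Be y e ∧ v = payoff t tall x e}

/-- Feasible defender strategies: `x ∈ [0,1]^W` with `∑_w c_w t_w x_w ≤ B_d`. -/
def DefFeas {W : Type*} [Fintype W] (t c : W → ℝ) (Bd : ℝ) (x : W → ℝ) : Prop :=
  (∀ w, x w ∈ Set.Icc (0:ℝ) 1) ∧ ∑ w, c w * t w * x w ≤ Bd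

lemma key_exchange {W : Type*} [Fintype W] (t tall pii : W → ℝ) (Ba Be : ℝ)
    (ht : ∀ w, 0 < t w) (htall : ∀ w, t w ≤ tall w)
    (x : W → ℝ) (hx : ∀ w, x w ∈ Set.Icc (0:ℝ) 1) (y : W → ℝ) :
    ∀ n : ℕ, ∀ e : W → ℝ, AttFeas tall pii Ba Be y e →
      ({w : W | 0 < e w ∧ e w < tall w} : Set W).ncard ≤ n →
      ∃ e', AttFeas tall pii Ba Be y e' ∧
        payoff t tall x e ≤ payoff t tall x e' ∧
        ({w : W | 0 < e' w ∧ e' w < tall w} : Set W).Subsingleton := by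
  classical
  set k : W → ℝ := fun w => (t w / tall w) * (1 - x w) with hk
  have hk0 : ∀ w, 0 ≤ k w := by
    intro w
    have h1 : 0 < tall w := lt_of_lt_of_le (ht w) (htall w)
    have h2 : 0 ≤ 1 - x w := by have := (hx w).2; linarith
    exact mul_nonneg (le_of_lt (div_pos (ht w) h1)) h2
  intro n
  induction n with
  | zero =>
    intro e hfeas hcard
    refine ⟨e, hfeas, le_refl _, ?_⟩
    have : ({w : W | 0 < e w ∧ e w < tall w} : Set W) = ∅ := by
      have := Set.ncard_eq_zero (Set.toFinite _) |>.mp (Nat.le_zero.mp hcard)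
      exact this
    rw [this]; exact Set.subsingleton_empty
  | succ n ih =>
    intro e hfeas hcard
    set S : Set W := {w : W | 0 < e w ∧ e w < tall w} with hS
    by_cases hbig : 1 < S.ncard
    · -- two distinct partial sites
      obtain ⟨a, b, ha, hb, hab⟩ := (Set.one_lt_ncard_iff (Set.toFinite S)).mp hbig
      -- wlog k a ≥ k b : choose w₁ the larger
      obtain ⟨w₁, w₂, hw₁, hw₂, hne, hkle⟩ :
          ∃ w₁ w₂, w₁ ∈ S ∧ w₂ ∈ S ∧ w₁ ≠ w₂ ∧ k w₂ ≤ k w₁ := by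
        rcases le_total (k a) (k b) with h | h
        · exact ⟨b, a, hb, ha, hab.symm, h⟩
        · exact ⟨a, b, ha, hb, hab, h⟩
      obtain ⟨hw₁pos, hw₁lt⟩ := hw₁
      obtain ⟨hw₂pos, hw₂lt⟩ := hw₂
      obtain ⟨hy01, he0, hesum, hpy, hebd⟩ := hfeas
      have hy₁ : y w₁ = 1 := by
        rcases hy01 w₁ with h | h
        · exfalso; have := hebd w₁; rw [h, mul_zero] at this; linarith
        · exact h
      set δ : ℝ := min (e w₂) (tall w₁ - e w₁) with hδ
      have hδ₁ : δ ≤ e w₂ := min_le_left _ _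
      have hδ₂ : δ ≤ tall w₁ - e w₁ := min_le_right _ _
      have hδ0 : 0 ≤ δ := le_min (le_of_lt hw₂pos) (by linarith)
      set e' : W → ℝ := fun w => if w = w₁ then e w₁ + δ
        else if w = w₂ then e w₂ - δ else e w with he'
      have he'w₁ : e' w₁ = e w₁ + δ := by simp [he']
      have he'w₂ : e' w₂ = e w₂ - δ := by simp [he', hne.symm]
      have he'other : ∀ w, w ≠ w₁ → w ≠ w₂ → e' w = e w := by
        intro w h1 h2; simp [he', h1, h2]
      -- generic sum identity
      have hsum : ∀ g : W → ℝ, ∑ w, g w * e' w = (∑ w, g w * e w) + (g w₁ - g w₂) * δ := by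
        intro g
        have h1 : ∑ w, (g w * e' w - g w * e w) = (g w₁ - g w₂) * δ := by
          rw [← Finset.sum_subset (Finset.subset_univ ({w₁, w₂} : Finset W))]
          · rw [Finset.sum_pair hne, he'w₁, he'w₂]; ring
          · intro w _ hw
            simp only [Finset.mem_insert, Finset.mem_singleton, not_or] at hw
            rw [he'other w hw.1 hw.2]; ring
        have h2 : ∑ w, (g w * e' w - g w * e w)
            = (∑ w, g w * e' w) - ∑ w, g w * e w := Finset.sum_sub_distrib _ _
        linarith [h1, h2.symm.trans h1]
      have hsum1 : ∑ w, e' w = ∑ w, e w := by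
        have := hsum (fun _ => 1)
        simpa using this
      have hfeas' : AttFeas tall pii Ba Be y e' := by
        refine ⟨hy01, ?_, ?_, hpy, ?_⟩
        · intro w
          by_cases h1 : w = w₁
          · rw [h1, he'w₁]; linarith [he0 w₁]
          by_cases h2 : w = w₂
          · rw [h2, he'w₂]; linarith
          · rw [he'other w h1 h2]; exact he0 w
        · rw [hsum1]; exact hesum
        · intro w
          by_cases h1 : w = w₁
          · rw [h1, he'w₁, hy₁, mul_one]; linarith
          by_cases h2 : w = w₂
          · rw [h2, he'w₂]; linarith [hebd w₂]
          · rw [he'other w h1 h2]; exact hebd w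
      have hpay : payoff t tall x e ≤ payoff t tall x e' := by
        have h := hsum k
        unfold payoff
        have hnn : 0 ≤ (k w₁ - k w₂) * δ := mul_nonneg (by linarith) hδ0
        calc ∑ w, (t w / tall w) * (1 - x w) * e w = ∑ w, k w * e w := rfl
          _ ≤ (∑ w, k w * e w) + (k w₁ - k w₂) * δ := by linarith
          _ = ∑ w, k w * e' w := h.symm
          _ = ∑ w, (t w / tall w) * (1 - x w) * e' w := rfl
      -- the new partial set is strictly smaller
      set S' : Set W := {w : W | 0 < e' w ∧ e' w < tall w} with hS'
      have hsmall : S'.ncard ≤ n := by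
        obtain ⟨z, hzS, hznot⟩ : ∃ z, z ∈ S ∧ z ∉ S' := by
          rcases min_cases (e w₂) (tall w₁ - e w₁) with ⟨hmin, _⟩ | ⟨hmin, _⟩
          · refine ⟨w₂, ⟨hw₂pos, hw₂lt⟩, ?_⟩
            intro hz
            have : e' w₂ = 0 := by rw [he'w₂, hδ]; rw [hmin]; ring
            exact absurd hz.1 (by rw [this]; exact lt_irrefl 0)
          · refine ⟨w₁, ⟨hw₁pos, hw₁lt⟩, ?_⟩
            intro hz
            have : e' w₁ = tall w₁ := by rw [he'w₁, hδ]; rw [hmin]; ring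
            exact absurd hz.2 (by rw [this]; exact lt_irrefl _)
        have hsub : S' ⊆ S := by
          intro w hw
          by_contra hwS
          by_cases h1 : w = w₁
          · exact hwS (h1 ▸ ⟨hw₁pos, hw₁lt⟩)
          by_cases h2 : w = w₂
          · exact hwS (h2 ▸ ⟨hw₂pos, hw₂lt⟩)
          · rw [hS', Set.mem_setOf_eq, he'other w h1 h2] at hw
            exact hwS hw
        have hss : S' ⊂ S := ⟨hsub, fun h => hznot (h hzS)⟩
        have := Set.ncard_lt_ncard hss (Set.toFinite S)
        omega
      obtain ⟨e'', hfeas'', hpay'', hss''⟩ := ih e' hfeas' hsmall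
      exact ⟨e'', hfeas'', le_trans hpay hpay'', hss''⟩
    · -- at most one partial site already
      refine ⟨e, hfeas, le_refl _, ?_⟩
      push_neg at hbig
      intro a ha b hb
      rw [← hS] at ha hb
      rcases (Set.ncard_le_one_iff_eq (Set.toFinite S)).mp hbig with h | ⟨c, hc⟩
      · rw [h] at ha; exact absurd ha (Set.notMem_empty a)
      · rw [hc, Set.mem_singleton_iff] at ha hb
        rw [ha, hb]

/-- Theorem 2 of the paper: any feasible attacker strategy can be replaced
by one that is at least as good and puts partial effort `0 < e'_w < t_w^all`
on at most one website. -/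
theorem at_most_one_partial_effort
    {W : Type*} [Fintype W] (t tall c pii : W → ℝ) (Bd Ba Be : ℝ)
    (ht : ∀ w, 0 < t w) (htall : ∀ w, t w ≤ tall w)
    (hc : ∀ w, 0 < c w) (hpii : ∀ w, 0 < pii w)
    (hBd : 0 ≤ Bd) (hBa : 0 ≤ Ba) (hBe : 0 ≤ Be)
    (x : W → ℝ) (hx : ∀ w, x w ∈ Set.Icc (0:ℝ) 1)
    (y e : W → ℝ) (hfeas : AttFeas tall pii Ba Be y e) :
    ∃ y' e' : W → ℝ, AttFeas tall pii Ba Be y' e' ∧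
      payoff t tall x e ≤ payoff t tall x e' ∧
      ({w : W | 0 < e' w ∧ e' w < tall w} : Set W).Subsingleton := by
  obtain ⟨e', hfeas', hpay', hss'⟩ := key_exchange t tall pii Ba Be ht htall x hx y
    (({w : W | 0 < e w ∧ e w < tall w} : Set W).ncard) e hfeas le_rfl
  exact ⟨y, e', hfeas', hpay', hss'⟩
end

section
/- In the SED game, suppose 0 < B_e ≤ t_w^all and π_w ≤ B_a for all w ∈ W, and W is nonempty. Then for every x ∈ [0,1]^W, the attacker's optimal value satisfies IntVal(x) = max_{w ∈ W} κ_w(1−x_w)·B_e. (This is the key fact behind Corollary 1: with a small effort budget, the attacker's best response concentrates all scanning effort on a single website.) -/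
open Finset

/-! The payoff is linear in the effort `e` with nonnegative coefficients `κ_w (1 - x_w)`, so under
`∑ e ≤ B_e` it is at most the largest coefficient times `B_e`. Putting all of `B_e` on a website
with the largest coefficient attains this, and is feasible because `B_e ≤ t_w^all` and `π_w ≤ B_a`. -/

theorem Finset.sum_mul_le_sup'_mul {ι : Type*} {s : Finset ι} (hs : s.Nonempty) {a e : ι → ℝ}
    (ha : ∀ i ∈ s, 0 ≤ a i) (he : ∀ i ∈ s, 0 ≤ e i) {B : ℝ} (heB : ∑ i ∈ s, e i ≤ B) :
    ∑ i ∈ s, a i * e i ≤ s.sup' hs (fun i => a i * B) := by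
  obtain ⟨i₀, hi₀, hmax⟩ := s.exists_mem_eq_sup' hs a
  calc ∑ i ∈ s, a i * e i
      ≤ ∑ i ∈ s, a i₀ * e i :=
        sum_le_sum fun i hi => mul_le_mul_of_nonneg_right (hmax ▸ s.le_sup' a hi) (he i hi)
    _ = a i₀ * ∑ i ∈ s, e i := (mul_sum s e (a i₀)).symm
    _ ≤ a i₀ * B := mul_le_mul_of_nonneg_left heB (ha i₀ hi₀)
    _ ≤ s.sup' hs (fun i => a i * B) := s.le_sup' (fun i => a i * B) hi₀

section SED

variable {W : Type*} [Fintype W] {t tall pii : W → ℝ} {Ba Be : ℝ}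

theorem payoff_le_sup' [Nonempty W] (ht : ∀ w, 0 ≤ t w) (htall : ∀ w, 0 ≤ tall w)
    {x : W → ℝ} (hx : ∀ w, x w ≤ 1) {y e : W → ℝ} (hfeas : AttFeas tall pii Ba Be y e) :
    payoff t tall x e ≤
      univ.sup' univ_nonempty (fun w => (t w / tall w) * (1 - x w) * Be) :=
  sum_mul_le_sup'_mul univ_nonempty
    (fun w _ => mul_nonneg (div_nonneg (ht w) (htall w)) (sub_nonneg.mpr (hx w)))
    (fun w _ => hfeas.2.1 w) hfeas.2.2.1

theorem attFeas_single [DecidableEq W] {w₀ : W} (hBe : 0 ≤ Be) (hBe' : Be ≤ tall w₀)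
    (haff : pii w₀ ≤ Ba) :
    AttFeas tall pii Ba Be (Pi.single w₀ 1) (Pi.single w₀ Be) := by
  refine ⟨fun w => ?_, fun w => ?_, ?_, ?_, fun w => ?_⟩
  · by_cases h : w = w₀ <;> simp [h]
  · by_cases h : w = w₀ <;> simp [h, hBe]
  · simp
  · simpa [Pi.single_apply] using haff
  · by_cases h : w = w₀ <;> simp [h, hBe']

theorem payoff_single [DecidableEq W] (x : W → ℝ) (w₀ : W) :
    payoff t tall x (Pi.single w₀ Be) = (t w₀ / tall w₀) * (1 - x w₀) * Be := by
  simp [payoff, Pi.single_apply]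

end SED

theorem small_effort_budget_value_general
    {W : Type*} [Fintype W] [Nonempty W] (t tall pii : W → ℝ) (Ba Be : ℝ)
    (ht : ∀ w, 0 < t w)
    (hBe : 0 < Be) (hBe' : ∀ w, Be ≤ tall w) (haff : ∀ w, pii w ≤ Ba)
    (x : W → ℝ) (hx : ∀ w, x w ∈ Set.Icc (0:ℝ) 1) :
    IntVal t tall pii Ba Be x =
      Finset.univ.sup' Finset.univ_nonempty
        (fun w => (t w / tall w) * (1 - x w) * Be) := by
  classical
  refine IsGreatest.csSup_eq ⟨?_, ?_⟩
  · obtain ⟨w₀, -, hw₀⟩ := univ.exists_mem_eq_sup' univ_nonempty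
      (fun w => (t w / tall w) * (1 - x w) * Be)
    exact ⟨_, _, attFeas_single hBe.le (hBe' w₀) (haff w₀), by rw [payoff_single, hw₀]⟩
  · rintro v ⟨y, e, hfeas, rfl⟩
    exact payoff_le_sup' (fun w => (ht w).le) (fun w => hBe.le.trans (hBe' w))
      (fun w => (hx w).2) hfeas

/-- behind Corollary 1: with a small effort budget
`0 < B_e ≤ t_w^all` for all `w` (and every website affordable, `π_w ≤ B_a`),
the attacker's optimal value is `max_w κ_w (1 - x_w) B_e`. -/
theorem small_effort_budget_value
    {W : Type*} [Fintype W] [Nonempty W] (t tall c pii : W → ℝ) (Bd Ba Be : ℝ)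
    (ht : ∀ w, 0 < t w) (htall : ∀ w, t w ≤ tall w)
    (hc : ∀ w, 0 < c w) (hpii : ∀ w, 0 < pii w)
    (hBd : 0 ≤ Bd) (hBa : 0 ≤ Ba)
    (hBe : 0 < Be) (hBe' : ∀ w, Be ≤ tall w) (haff : ∀ w, pii w ≤ Ba)
    (x : W → ℝ) (hx : ∀ w, x w ∈ Set.Icc (0:ℝ) 1) :
    IntVal t tall pii Ba Be x =
      Finset.univ.sup' Finset.univ_nonempty
        (fun w => (t w / tall w) * (1 - x w) * Be) :=
  small_effort_budget_value_general t tall pii Ba Be ht hBe hBe' haff x hx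
end

section
/- In the SED game, suppose π_w = 1 for all w ∈ W, B_a = k for a natural number k, and B_e ≥ ∑_{w ∈ W} t_w^all (modeling unlimited scanning effort). Then for every x ∈ [0,1]^W, IntVal(x) = max over subsets S ⊆ W with |S| ≤ k of ∑_{w ∈ S} t_w(1−x_w); in particular, when k ≤ |W| this equals the sum of the k largest values among the numbers t_w(1−x_w), w ∈ W. (This is the key fact behind Theorem 3: with uniform attack cost and unlimited effort, the attacker greedily picks the top-k websites by unaltered organization traffic.) -/
open Finset

/-- behind Theorem 3: under uniform attack cost `π_w = 1`,
budget `B_a = k ∈ ℕ`, and unlimited scanning effort `B_e ≥ ∑_w t_w^all`, the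
attacker's optimal value equals the maximum over subsets `S` with `|S| ≤ k`
of `∑_{w ∈ S} t_w (1 - x_w)` (i.e.\ the sum of the `k` largest unaltered
organization traffics when `k ≤ |W|`). -/
theorem uniform_cost_unlimited_effort_value
    {W : Type*} [Fintype W] (t tall c pii : W → ℝ) (Bd Ba Be : ℝ) (k : ℕ)
    (ht : ∀ w, 0 < t w) (htall : ∀ w, t w ≤ tall w)
    (hc : ∀ w, 0 < c w)
    (hpii : ∀ w, pii w = 1) (hBa : Ba = (k : ℝ)) (hBe : ∑ w, tall w ≤ Be)
    (hBd : 0 ≤ Bd)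
    (x : W → ℝ) (hx : ∀ w, x w ∈ Set.Icc (0:ℝ) 1) :
    IsGreatest {v : ℝ | ∃ S : Finset W, S.card ≤ k ∧ v = ∑ w ∈ S, t w * (1 - x w)}
      (IntVal t tall pii Ba Be x) := by
  classical
  have htall0 : ∀ w, 0 < tall w := fun w => lt_of_lt_of_le (ht w) (htall w)
  have hx1 : ∀ w, 0 ≤ 1 - x w := fun w => by have := (hx w).2; linarith
  set g : W → ℝ := fun w => t w * (1 - x w) with hg
  have hg0 : ∀ w, 0 ≤ g w := fun w => mul_nonneg (ht w).le (hx1 w)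
  set A := {v | ∃ y e, AttFeas tall pii Ba Be y e ∧ v = payoff t tall x e} with hA
  -- For every subset S with card ≤ k, the value ∑_{w∈S} g w is attainable
  have hmem : ∀ S : Finset W, S.card ≤ k → (∑ w ∈ S, g w) ∈ A := by
    intro S hS
    refine ⟨fun w => if w ∈ S then 1 else 0, fun w => tall w * (if w ∈ S then 1 else 0),
      ⟨?_, ?_, ?_, ?_, ?_⟩, ?_⟩
    · intro w; by_cases h : w ∈ S <;> simp [h]
    · intro w; by_cases h : w ∈ S <;> simp [h, (htall0 w).le]
    · refine le_trans (Finset.sum_le_sum fun w _ => ?_) hBe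
      by_cases h : w ∈ S <;> simp [h, (htall0 w).le]
    · simp only [hpii, one_mul, hBa]
      have : ∑ w, (if w ∈ S then (1:ℝ) else 0) = S.card := by
        simp
      rw [this]; exact_mod_cast hS
    · intro w; exact le_refl _
    · unfold payoff
      have : ∀ w, t w / tall w * (1 - x w) * (tall w * (if w ∈ S then (1:ℝ) else 0))
          = g w * (if w ∈ S then (1:ℝ) else 0) := by
        intro w
        by_cases h : w ∈ S
        · simp only [h, if_true, mul_one, hg]
          field_simp [(htall0 w).ne']
        · simp [h]
      rw [Finset.sum_congr rfl fun w _ => this w]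
      simp [mul_ite, Finset.sum_ite_mem]
  -- Every attainable value is ≤ some subset value
  have hub : ∀ v ∈ A, ∃ S : Finset W, S.card ≤ k ∧ v ≤ ∑ w ∈ S, g w := by
    rintro v ⟨y, e, ⟨hy01, he0, hBe', hBa', hey⟩, rfl⟩
    refine ⟨Finset.univ.filter (fun w => y w = 1), ?_, ?_⟩
    · have h1 : ∑ w, pii w * y w = ∑ w, (if y w = 1 then (1:ℝ) else 0) := by
        refine Finset.sum_congr rfl fun w _ => ?_
        rcases hy01 w with h | h <;> simp [h, hpii]
      have h2 : ((Finset.univ.filter (fun w => y w = 1)).card : ℝ) ≤ k := by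
        rw [← Finset.sum_boole]
        calc (∑ w, if y w = 1 then (1:ℝ) else 0) = ∑ w, pii w * y w := h1.symm
          _ ≤ Ba := hBa'
          _ = k := hBa
      exact_mod_cast h2
    · unfold payoff
      have hle : ∀ w, t w / tall w * (1 - x w) * e w ≤ g w * y w := by
        intro w
        have h1 : t w / tall w * (1 - x w) * e w ≤ t w / tall w * (1 - x w) * (tall w * y w) := by
          refine mul_le_mul_of_nonneg_left (hey w) ?_
          exact mul_nonneg (div_nonneg (ht w).le (htall0 w).le) (hx1 w)
        have h2 : t w / tall w * (1 - x w) * (tall w * y w) = g w * y w := by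
          rw [hg]; field_simp [(htall0 w).ne']
        linarith [h1, h2.le]
      refine le_trans (Finset.sum_le_sum fun w _ => hle w) ?_
      have : ∀ w, g w * y w = g w * (if w ∈ Finset.univ.filter (fun w => y w = 1) then (1:ℝ) else 0) := by
        intro w
        rcases hy01 w with h | h <;> simp [h]
      rw [Finset.sum_congr rfl fun w _ => this w, Finset.sum_filter]
      simp [mul_ite]
  -- the maximum over subsets
  set F := Finset.univ.powerset.filter (fun S : Finset W => S.card ≤ k) with hF
  have hFne : (∅ : Finset W) ∈ F := by simp [hF]
  set V := F.image (fun S => ∑ w ∈ S, g w) with hV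
  have hVne : V.Nonempty := ⟨_, Finset.mem_image_of_mem _ hFne⟩
  set M := V.max' hVne with hM
  obtain ⟨S₀, hS₀F, hS₀⟩ := Finset.mem_image.mp (V.max'_mem hVne)
  have hS₀k : S₀.card ≤ k := (Finset.mem_filter.mp hS₀F).2
  have hgr : IsGreatest A M := by
    constructor
    · have := hmem S₀ hS₀k; rwa [hS₀] at this
    · rintro v hv
      obtain ⟨S, hSk, hle⟩ := hub v hv
      refine le_trans hle (V.le_max' _ ?_)
      exact Finset.mem_image_of_mem _ (Finset.mem_filter.mpr ⟨Finset.mem_powerset.mpr (Finset.subset_univ S), hSk⟩)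
  have hIV : IntVal t tall pii Ba Be x = M := hgr.csSup_eq
  rw [hIV]
  constructor
  · exact ⟨S₀, hS₀k, hS₀.symm⟩
  · rintro v ⟨S, hSk, rfl⟩
    refine V.le_max' _ ?_
    exact Finset.mem_image_of_mem _ (Finset.mem_filter.mpr ⟨Finset.mem_powerset.mpr (Finset.subset_univ S), hSk⟩)
end

section
/- Let I be a nonempty finite index set, (a_i)_{i∈I} real numbers, and k a natural number with k ≤ |I|. Then the sum of the k largest values among the a_i equals the minimum over z ∈ ℝ of the quantity k·z + ∑_{i∈I} max(a_i − z, 0). (This is the Ogryczak–Tamir reformulation used in the proof of Theorem 3 to express the sum of the k largest linear functions as a single linear program.) -/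
open Finset

/-- Ogryczak–Tamir reformulation: for a nonempty finite family
`(a_i)_{i ∈ I}` and `k ≤ |I|`, the sum of the `k` largest values among the `a_i`
(i.e. the greatest value of `∑_{i ∈ S} a_i` over subsets `S` with `|S| = k`)
equals the minimum over `z ∈ ℝ` of `k·z + ∑_i max (a_i - z) 0`. -/
theorem ogryczak_tamir
    {I : Type*} [Fintype I] [Nonempty I] (a : I → ℝ) (k : ℕ)
    (hk : k ≤ Fintype.card I) :
    ∃ m : ℝ,
      IsGreatest {v : ℝ | ∃ S : Finset I, S.card = k ∧ v = ∑ i ∈ S, a i} m ∧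
      IsLeast {v : ℝ | ∃ z : ℝ, v = (k : ℝ) * z + ∑ i, max (a i - z) 0} m := by
  classical
  -- the collection of candidate sets
  have hne : ((univ : Finset I).powersetCard k).Nonempty := by
    apply Finset.powersetCard_nonempty.2
    simpa using hk
  obtain ⟨S, hSmem, hSmax⟩ :=
    Finset.exists_max_image ((univ : Finset I).powersetCard k) (fun T => ∑ i ∈ T, a i) hne
  rw [Finset.mem_powersetCard] at hSmem
  have hScard : S.card = k := hSmem.2
  refine ⟨∑ i ∈ S, a i, ⟨⟨S, hScard, rfl⟩, ?_⟩, ?_, ?_⟩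
  · rintro v ⟨T, hT, rfl⟩
    exact hSmax T (Finset.mem_powersetCard.2 ⟨Finset.subset_univ T, hT⟩)
  · -- membership in the RHS set: choose a good z
    rcases Nat.eq_zero_or_pos k with hk0 | hkpos
    · subst hk0
      have hS0 : S = ∅ := Finset.card_eq_zero.mp hScard
      subst hS0
      obtain ⟨j, _, hj⟩ := Finset.exists_max_image (univ : Finset I) a univ_nonempty
      refine ⟨a j, ?_⟩
      have : ∀ i ∈ (univ : Finset I), max (a i - a j) 0 = 0 := by
        intro i _
        simp [max_eq_right, sub_nonpos.2 (hj i (mem_univ i))]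
      simp [Finset.sum_congr rfl this]
    · have hSne : S.Nonempty := Finset.card_pos.mp (hScard ▸ hkpos)
      obtain ⟨i₀, hi₀, hi₀min⟩ :=
        Finset.exists_min_image S a hSne
      set z := a i₀ with hz
      -- every element outside S has value ≤ z
      have hout : ∀ j, j ∉ S → a j ≤ z := by
        intro j hj
        by_contra hlt
        push_neg at hlt
        -- swap i₀ for j to get a larger sum
        set S' := insert j (S.erase i₀) with hS'
        have hjS' : j ∉ S.erase i₀ := fun h => hj (Finset.mem_of_mem_erase h)
        have hcard' : S'.card = k := by
          rw [hS', Finset.card_insert_of_notMem hjS',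
            Finset.card_erase_of_mem hi₀, hScard]
          omega
        have hsum' : ∑ i ∈ S', a i = ∑ i ∈ S.erase i₀, a i + a j := by
          rw [hS', Finset.sum_insert hjS']; ring
        have hsumS : ∑ i ∈ S, a i = ∑ i ∈ S.erase i₀, a i + a i₀ := by
          rw [add_comm, ← Finset.sum_insert (Finset.notMem_erase i₀ S),
            Finset.insert_erase hi₀]
        have : ∑ i ∈ S, a i < ∑ i ∈ S', a i := by
          rw [hsum', hsumS]; linarith
        have := hSmax S' (Finset.mem_powersetCard.2 ⟨Finset.subset_univ S', hcard'⟩)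
        linarith
      refine ⟨z, ?_⟩
      have h1 : ∑ i ∈ S, max (a i - z) 0 = ∑ i, max (a i - z) 0 :=
        Finset.sum_subset (Finset.subset_univ S) (by
          intro x _ hx
          simp [max_eq_right, sub_nonpos.2 (hout x hx)])
      have h2 : ∑ i ∈ S, max (a i - z) 0 = ∑ i ∈ S, (a i - z) := by
        apply Finset.sum_congr rfl
        intro i hi
        exact max_eq_left (sub_nonneg.2 (hi₀min i hi))
      rw [← h1, h2, Finset.sum_sub_distrib, Finset.sum_const, hScard]
      simp [nsmul_eq_mul]
  · -- lower bound: every value of the RHS is ≥ the max sum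
    rintro v ⟨z, rfl⟩
    have h1 : ∑ i ∈ S, a i ≤ ∑ i ∈ S, (z + max (a i - z) 0) := by
      apply Finset.sum_le_sum
      intro i _
      have : a i - z ≤ max (a i - z) 0 := le_max_left _ _
      linarith
    have h2 : ∑ i ∈ S, (z + max (a i - z) 0)
        = (k : ℝ) * z + ∑ i ∈ S, max (a i - z) 0 := by
      rw [Finset.sum_add_distrib, Finset.sum_const, hScard]
      simp [nsmul_eq_mul]
    have h3 : ∑ i ∈ S, max (a i - z) 0 ≤ ∑ i, max (a i - z) 0 :=
      Finset.sum_le_sum_of_subset_of_nonneg (Finset.subset_univ S)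
        (fun i _ _ => le_max_right _ _)
    linarith
end

section
/- In the SED game, suppose B_e ≥ t_w^all for all w ∈ W and π_w ≤ B_a for all w ∈ W. Then for every x ∈ [0,1]^W, the fractional relaxation value satisfies FracVal(x) ≤ 3·IntVal(x). (This is the core pointwise inequality in the proof of Theorem 4: the optimal fractional two-dimensional knapsack solution has at most two fractional variables, and each fractional term is dominated by a feasible single-website integral attack.) -/
open Finset

/-!
With `y_w = e_w / t_w^all`, the fractional attacker ranges over the polytope
`0 ≤ e ≤ t^all`, `∑ e_w ≤ B_e`, `∑ (π_w / t_w^all) e_w ≤ B_a`, on which the payoff is linear, so by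
Krein–Milman it suffices to bound it at extreme points. An extreme point of a box cut by `m`
half-spaces has at most `m` fractional coordinates: otherwise some nonzero direction supported on
them lies in the kernel of all `m` constraints, and the point is the midpoint of two feasible
points. Here `m = 2`. The saturated coordinates of an extreme point form an integral attack, worth
at most `IntVal`, and each of the two fractional coordinates is dominated by the single-website
attack on it, feasible because `t_w^all ≤ B_e` and `π_w ≤ B_a`.
-/

open Filter Topology

section BoxPolytope

variable {ι κ : Type*} [Fintype ι]

theorem exists_ne_zero_supported_forall_sum_mul_eq_zero {K : Type*} [Field K] [Fintype κ]
    (A : κ → ι → K) {s : Finset ι} (hs : Fintype.card κ < #s) :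
    ∃ d : ι → K, d ≠ 0 ∧ (∀ i ∉ s, d i = 0) ∧ ∀ k, ∑ i, A k i * d i = 0 := by
  classical
  have hdep : ¬LinearIndepOn K (fun i k => A k i) (s : Set ι) := fun h => by
    have := h.fintype_card_le_finrank
    simp only [Finset.coe_sort_coe, Fintype.card_coe, Module.finrank_fintype_fun_eq_card] at this
    omega
  obtain ⟨f, hf, i, hi, hfi⟩ := not_linearIndepOn_finset_iff.mp hdep
  refine ⟨fun i => if i ∈ s then f i else 0, fun h => hfi (by simpa [hi] using congrFun h i),
    fun i hi => if_neg hi, fun k => ?_⟩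
  simpa [Finset.sum_apply, mul_comm] using congrFun hf k

theorem isClosed_setOf_sum_mul_le (a : ι → ℝ) (c : ℝ) :
    IsClosed {e : ι → ℝ | ∑ i, a i * e i ≤ c} :=
  isClosed_le (by fun_prop) continuous_const

theorem convex_setOf_sum_mul_le (a : ι → ℝ) (c : ℝ) :
    Convex ℝ {e : ι → ℝ | ∑ i, a i * e i ≤ c} :=
  convex_halfSpace_le ⟨fun x y => by simp [mul_add, Finset.sum_add_distrib],
    fun r x => by simp [Finset.mul_sum, mul_left_comm]⟩ c

def boxPolytope (u : ι → ℝ) (A : κ → ι → ℝ) (b : κ → ℝ) : Set (ι → ℝ) :=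
  Set.Icc 0 u ∩ ⋂ k, {e | ∑ i, A k i * e i ≤ b k}

noncomputable def fractionalCoords (u e : ι → ℝ) : Finset ι :=
  {i | 0 < e i ∧ e i < u i}

variable {u : ι → ℝ} {A : κ → ι → ℝ} {b : κ → ℝ}

theorem isCompact_boxPolytope : IsCompact (boxPolytope u A b) :=
  isCompact_Icc.inter_right <| isClosed_iInter fun k => isClosed_setOf_sum_mul_le (A k) (b k)

theorem convex_boxPolytope : Convex ℝ (boxPolytope u A b) :=
  (convex_Icc 0 u).inter <| convex_iInter fun k => convex_setOf_sum_mul_le (A k) (b k)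

theorem add_smul_mem_boxPolytope {e d : ι → ℝ} (he : e ∈ boxPolytope u A b)
    (hd : ∀ k, ∑ i, A k i * d i = 0) {s : ℝ} (hs : e + s • d ∈ Set.Icc 0 u) :
    e + s • d ∈ boxPolytope u A b := by
  refine ⟨hs, Set.mem_iInter.2 fun k => ?_⟩
  have hek := Set.mem_iInter.1 he.2 k
  simpa [mul_add, Finset.sum_add_distrib, mul_left_comm _ s, ← Finset.mul_sum, hd k] using hek

theorem card_fractionalCoords_le_of_mem_extremePoints [Fintype κ] {e : ι → ℝ}
    (he : e ∈ (boxPolytope u A b).extremePoints ℝ) :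
    #(fractionalCoords u e) ≤ Fintype.card κ := by
  by_contra! hcard
  obtain ⟨d, hd0, hdsupp, hdA⟩ := exists_ne_zero_supported_forall_sum_mul_eq_zero A hcard
  have hbox : ∀ᶠ s in 𝓝 (0 : ℝ), ∀ i, e i + s * d i ∈ Set.Icc 0 (u i) :=
    eventually_all.2 fun i => by
      by_cases hi : 0 < e i ∧ e i < u i
      · exact (Continuous.tendsto' (by fun_prop) 0 (e i) (by simp)).eventually
          (Icc_mem_nhds hi.1 hi.2)
      · simpa [hdsupp i (by simpa [fractionalCoords] using hi)] using
          (⟨he.1.1.1 i, he.1.1.2 i⟩ : e i ∈ Set.Icc 0 (u i))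
  obtain ⟨ε, hε, hball⟩ := Metric.eventually_nhds_iff.1 hbox
  have hmem : ∀ s, |s| < ε → e + s • d ∈ boxPolytope u A b := fun s hs => by
    have hs' : dist s 0 < ε := by simpa using hs
    exact add_smul_mem_boxPolytope he.1 hdA ⟨fun i => (hball hs' i).1, fun i => (hball hs' i).2⟩
  have hmid : e ∈ openSegment ℝ (e + (ε / 2) • d) (e + (-(ε / 2)) • d) :=
    ⟨1 / 2, 1 / 2, by norm_num, by norm_num, by norm_num, by ext; simp; ring⟩
  have := he.2 (hmem _ (by rw [abs_of_pos (by positivity)]; linarith))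
    (hmem _ (by rw [abs_neg, abs_of_pos (by positivity)]; linarith)) hmid
  exact hd0 ((smul_eq_zero.1 (add_eq_left.1 this)).resolve_left (by positivity))

theorem sum_mul_le_card_fractionalCoords_add_one_mul {a e : ι → ℝ} {M : ℝ} (ha : 0 ≤ a)
    (hA : 0 ≤ A) (hsingle : ∀ i, a i * u i ≤ M)
    (hintegral : ∀ e ∈ boxPolytope u A b, (∀ i, e i = 0 ∨ e i = u i) →
      ∑ i, a i * e i ≤ M)
    (he : e ∈ boxPolytope u A b) :
    ∑ i, a i * e i ≤ (#(fractionalCoords u e) + 1) * M := by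
  classical
  set F := fractionalCoords u e
  set e' : ι → ℝ := fun i => if e i = u i then u i else 0
  have hu : ∀ i, 0 ≤ u i := fun i => (he.1.1 i).trans (he.1.2 i)
  have he'e : e' ≤ e := fun i => by
    by_cases h : e i = u i
    · simp [e', h]
    · simpa [e', h] using he.1.1 i
  have he'box : e' ∈ boxPolytope u A b := by
    refine ⟨⟨fun i => ?_, fun i => ?_⟩, Set.mem_iInter.2 fun k => ?_⟩
    · by_cases h : e i = u i <;> simp [e', h, hu i]
    · by_cases h : e i = u i <;> simp [e', h, hu i]
    · exact (Finset.sum_le_sum fun i _ => mul_le_mul_of_nonneg_left (he'e i) (hA k i)).trans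
        (Set.mem_iInter.1 he.2 k)
  have hrest : ∀ i ∉ F, e i - e' i = 0 := fun i hi => by
    by_cases h : e i = u i
    · simp [e', h]
    · have : e i = 0 := by
        simp only [F, fractionalCoords, Finset.mem_filter_univ, not_and, not_lt] at hi
        exact le_antisymm (not_lt.1 fun h0 => h (le_antisymm (he.1.2 i) (hi h0))) (he.1.1 i)
      rw [show e' i = 0 from if_neg h, this, sub_zero]
  have hfrac : ∀ i ∈ F, a i * (e i - e' i) ≤ M := fun i hi => by
    simp only [F, fractionalCoords, Finset.mem_filter_univ] at hi
    simpa [e', hi.2.ne] using (mul_le_mul_of_nonneg_left hi.2.le (ha i)).trans (hsingle i)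
  calc ∑ i, a i * e i = ∑ i, a i * e' i + ∑ i ∈ F, a i * (e i - e' i) := by
        rw [Finset.sum_subset (Finset.subset_univ F) fun i _ hi => by simp [hrest i hi],
          ← Finset.sum_add_distrib]
        simp [mul_sub]
    _ ≤ M + #F • M := by
        refine add_le_add (hintegral e' he'box fun i => ?_) (Finset.sum_le_card_nsmul _ _ _ hfrac)
        by_cases h : e i = u i <;> simp [e', h]
    _ = (#F + 1) * M := by rw [nsmul_eq_mul]; ring

theorem sum_mul_le_of_mem_boxPolytope [Fintype κ] {a : ι → ℝ} {M : ℝ} (ha : 0 ≤ a)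
    (hA : 0 ≤ A) (hM : 0 ≤ M) (hsingle : ∀ i, a i * u i ≤ M)
    (hintegral : ∀ e ∈ boxPolytope u A b, (∀ i, e i = 0 ∨ e i = u i) →
      ∑ i, a i * e i ≤ M)
    {e : ι → ℝ} (he : e ∈ boxPolytope u A b) :
    ∑ i, a i * e i ≤ (Fintype.card κ + 1) * M := by
  have hext : (boxPolytope u A b).extremePoints ℝ ⊆
      {e | ∑ i, a i * e i ≤ (Fintype.card κ + 1) * M} := fun e he => by
    refine (sum_mul_le_card_fractionalCoords_add_one_mul ha hA hsingle hintegral he.1).trans ?_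
    gcongr
    exact_mod_cast card_fractionalCoords_le_of_mem_extremePoints he
  rw [← closure_convexHull_extremePoints isCompact_boxPolytope convex_boxPolytope] at he
  exact closure_minimal (convexHull_min hext (convex_setOf_sum_mul_le _ _))
    (isClosed_setOf_sum_mul_le _ _) he

end BoxPolytope

section SED

variable {W : Type*} [Fintype W] {t tall pii : W → ℝ} {Ba Be : ℝ}

def sedPolytope (tall pii : W → ℝ) (Ba Be : ℝ) : Set (W → ℝ) :=
  boxPolytope tall ![fun _ => 1, fun w => pii w / tall w] ![Be, Ba]

theorem mem_sedPolytope {e : W → ℝ} :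
    e ∈ sedPolytope tall pii Ba Be ↔
      e ∈ Set.Icc 0 tall ∧ ∑ w, e w ≤ Be ∧ ∑ w, pii w / tall w * e w ≤ Ba := by
  simp [sedPolytope, boxPolytope, Fin.forall_fin_two]

theorem mem_sedPolytope_of_fracFeas (htall : ∀ w, 0 < tall w) (hpii : ∀ w, 0 ≤ pii w)
    {y e : W → ℝ} (h : FracFeas tall pii Ba Be y e) : e ∈ sedPolytope tall pii Ba Be := by
  obtain ⟨hy, he0, hBe, hBa, hey⟩ := h
  refine mem_sedPolytope.2 ⟨⟨he0, fun w => ?_⟩, hBe, (sum_le_sum fun w _ => ?_).trans hBa⟩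
  · exact (hey w).trans (mul_le_of_le_one_right (htall w).le (hy w).2)
  · calc pii w / tall w * e w ≤ pii w / tall w * (tall w * y w) :=
          mul_le_mul_of_nonneg_left (hey w) (div_nonneg (hpii w) (htall w).le)
      _ = pii w * y w := by field_simp [(htall w).ne']

theorem attFeas_of_mem_sedPolytope (htall : ∀ w, tall w ≠ 0) {e : W → ℝ}
    (he : e ∈ sedPolytope tall pii Ba Be) (hintegral : ∀ w, e w = 0 ∨ e w = tall w) :
    AttFeas tall pii Ba Be (fun w => if e w = 0 then 0 else 1) e := by
  obtain ⟨⟨he0, hetall⟩, hBe, hBa⟩ := mem_sedPolytope.1 he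
  have hpay : ∀ w, pii w / tall w * e w = pii w * if e w = 0 then 0 else 1 := fun w => by
    rcases hintegral w with h | h
    · simp [h]
    · simp [h, htall w]
  refine ⟨fun w => by by_cases h : e w = 0 <;> simp [h], he0, hBe, ?_, fun w => ?_⟩
  · simpa only [hpay] using hBa
  · by_cases h : e w = 0 <;> simp [h, hetall w]

theorem zero_mem_sedPolytope (htall : ∀ w, 0 ≤ tall w) (hBa : 0 ≤ Ba) (hBe : 0 ≤ Be) :
    0 ∈ sedPolytope tall pii Ba Be :=
  mem_sedPolytope.2 ⟨⟨le_rfl, htall⟩, by simpa, by simpa⟩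

theorem single_mem_sedPolytope [DecidableEq W] (htall : ∀ w, 0 < tall w)
    (hBe : ∀ w, tall w ≤ Be) (hBa : ∀ w, pii w ≤ Ba) (w : W) :
    Pi.single w (tall w) ∈ sedPolytope tall pii Ba Be := by
  refine mem_sedPolytope.2 ⟨⟨fun v => ?_, fun v => ?_⟩, by simpa using hBe w, ?_⟩
  · by_cases h : v = w
    · subst h; simp [(htall v).le]
    · simp [h]
  · by_cases h : v = w
    · subst h; simp
    · simp [h, (htall v).le]
  · simpa [Pi.single_apply, (htall w).ne'] using hBa w

theorem bddAbove_payoff_attFeas (x : W → ℝ) :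
    BddAbove {v | ∃ y e, AttFeas tall pii Ba Be y e ∧ v = payoff t tall x e} := by
  refine ⟨∑ w, |t w / tall w * (1 - x w)| * |tall w|, ?_⟩
  rintro _ ⟨y, e, ⟨hy, he0, -, -, hey⟩, rfl⟩
  refine sum_le_sum fun w _ => (le_abs_self _).trans ?_
  rw [abs_mul, abs_of_nonneg (he0 w)]
  gcongr
  rcases hy w with h | h
  · exact (by simpa [h] using hey w : e w ≤ 0).trans (abs_nonneg _)
  · exact (by simpa [h] using hey w : e w ≤ tall w).trans (le_abs_self _)

theorem payoff_le_intVal {x y e : W → ℝ} (h : AttFeas tall pii Ba Be y e) :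
    payoff t tall x e ≤ IntVal t tall pii Ba Be x :=
  le_csSup (bddAbove_payoff_attFeas x) ⟨y, e, h, rfl⟩

theorem sum_mul_le_of_mem_sedPolytope (htall : ∀ w, 0 < tall w) (hpii : ∀ w, 0 ≤ pii w)
    (hBe : ∀ w, tall w ≤ Be) (hBa : ∀ w, pii w ≤ Ba) {a : W → ℝ} {M : ℝ}
    (ha : 0 ≤ a) (hM : 0 ≤ M) (hintegral : ∀ e ∈ sedPolytope tall pii Ba Be,
      (∀ w, e w = 0 ∨ e w = tall w) → ∑ w, a w * e w ≤ M)
    {e : W → ℝ} (he : e ∈ sedPolytope tall pii Ba Be) : ∑ w, a w * e w ≤ 3 * M := by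
  classical
  have hA : (0 : Fin 2 → W → ℝ) ≤ ![fun _ => 1, fun w => pii w / tall w] := fun k w => by
    fin_cases k
    · simp
    · exact div_nonneg (hpii w) (htall w).le
  have hsingle : ∀ w, a w * tall w ≤ M := fun w => by
    simpa [Pi.single_apply] using hintegral _ (single_mem_sedPolytope htall hBe hBa w)
      fun v => by by_cases h : v = w <;> simp [h]
  simpa [show (2 : ℝ) + 1 = 3 by norm_num] using
    sum_mul_le_of_mem_boxPolytope ha hA hM hsingle hintegral he

end SED

theorem fracVal_le_three_intVal_general
    {W : Type*} [Fintype W] (t tall pii : W → ℝ) (Ba Be : ℝ)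
    (ht : ∀ w, 0 < t w) (htall : ∀ w, t w ≤ tall w)
    (hpii : ∀ w, 0 < pii w)
    (hBa : 0 ≤ Ba) (hBe : 0 ≤ Be)
    (hBe' : ∀ w, tall w ≤ Be) (haff : ∀ w, pii w ≤ Ba)
    (x : W → ℝ) (hx : ∀ w, x w ∈ Set.Icc (0:ℝ) 1) :
    FracVal t tall pii Ba Be x ≤ 3 * IntVal t tall pii Ba Be x := by
  have htall0 : ∀ w, 0 < tall w := fun w => (ht w).trans_le (htall w)
  have hintegral : ∀ e ∈ sedPolytope tall pii Ba Be, (∀ w, e w = 0 ∨ e w = tall w) →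
      payoff t tall x e ≤ IntVal t tall pii Ba Be x := fun e he he01 =>
    payoff_le_intVal (attFeas_of_mem_sedPolytope (fun w => (htall0 w).ne') he he01)
  have hI : 0 ≤ IntVal t tall pii Ba Be x := by
    simpa [payoff] using
      hintegral 0 (zero_mem_sedPolytope (fun w => (htall0 w).le) hBa hBe) (by simp)
  have ha : 0 ≤ fun w => t w / tall w * (1 - x w) := fun w =>
    mul_nonneg (div_nonneg (ht w).le (htall0 w).le) (sub_nonneg.2 (hx w).2)
  refine Real.sSup_le ?_ (by positivity)
  rintro _ ⟨y, e, he, rfl⟩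
  exact sum_mul_le_of_mem_sedPolytope htall0 (fun w => (hpii w).le) hBe' haff ha hI hintegral
    (mem_sedPolytope_of_fracFeas htall0 (fun w => (hpii w).le) he)

/-- core inequality in Theorem 4: if `B_e ≥ t_w^all` and
`π_w ≤ B_a` for all `w`, then the fractional relaxation value is at most three
times the integral value, pointwise in the defender strategy `x`. -/
theorem fracVal_le_three_intVal
    {W : Type*} [Fintype W] (t tall c pii : W → ℝ) (Bd Ba Be : ℝ)
    (ht : ∀ w, 0 < t w) (htall : ∀ w, t w ≤ tall w)
    (hc : ∀ w, 0 < c w) (hpii : ∀ w, 0 < pii w)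
    (hBd : 0 ≤ Bd) (hBa : 0 ≤ Ba) (hBe : 0 ≤ Be)
    (hBe' : ∀ w, tall w ≤ Be) (haff : ∀ w, pii w ≤ Ba)
    (x : W → ℝ) (hx : ∀ w, x w ∈ Set.Icc (0:ℝ) 1) :
    FracVal t tall pii Ba Be x ≤ 3 * IntVal t tall pii Ba Be x :=
  fracVal_le_three_intVal_general t tall pii Ba Be ht htall hpii hBa hBe hBe' haff x hx
end

section
/- Dominated websites (Theorem 6): in the SED game, let u, w ∈ W be distinct websites such that c_u t_u ≥ B_d (so that x_u^max := B_d/(c_u t_u) ≤ 1), κ_w ≤ κ_u(1 − B_d/(c_u t_u)), π_w ≥ π_u, and t_w^all ≤ t_u^all. Then for every feasible defender strategy x and every feasible attacker strategy (y,e), there exists a feasible attacker strategy (y',e') with f(x,e') ≥ f(x,e), e'_v = e_v for all v ∉ {u,w}, and such that e'_w > 0 implies e'_u = t_u^all. (That is, the attacker never benefits from scanning w before exhausting u.) -/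
open Finset

private lemma sum_sub_two {W : Type*} [Fintype W] [DecidableEq W] (g1 g2 : W → ℝ) (u w : W)
    (h : u ≠ w) (hv : ∀ v, v ≠ u → v ≠ w → g1 v = g2 v) :
    ∑ v, g1 v = ∑ v, g2 v + ((g1 u - g2 u) + (g1 w - g2 w)) := by
  have h1 : ∑ v, (g1 v - g2 v) = ∑ v ∈ ({u, w} : Finset W), (g1 v - g2 v) := by
    refine (Finset.sum_subset (Finset.subset_univ _) ?_).symm
    intro v _ hv'
    simp only [Finset.mem_insert, Finset.mem_singleton, not_or] at hv'
    rw [hv v hv'.1 hv'.2]; ring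
  rw [Finset.sum_pair h] at h1
  have h2 : ∑ v, (g1 v - g2 v) = ∑ v, g1 v - ∑ v, g2 v := Finset.sum_sub_distrib _ _
  linarith

/-- Theorem 6, dominated websites: if `c_u t_u ≥ B_d`,
`κ_w ≤ κ_u (1 - B_d/(c_u t_u))`, `π_w ≥ π_u` and `t_w^all ≤ t_u^all`, then against
any feasible defender strategy, any feasible attack can be modified (only on `u, w`)
into one that is at least as good and scans `w` only after exhausting `u`. -/
theorem dominated_website
    {W : Type*} [Fintype W] (t tall c pii : W → ℝ) (Bd Ba Be : ℝ)
    (ht : ∀ w, 0 < t w) (htall : ∀ w, t w ≤ tall w)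
    (hc : ∀ w, 0 < c w) (hpii : ∀ w, 0 < pii w)
    (hBd : 0 ≤ Bd) (hBa : 0 ≤ Ba) (hBe : 0 ≤ Be)
    (u w : W) (huw : u ≠ w)
    (hbudget : Bd ≤ c u * t u)
    (hkappa : (t w / tall w) ≤ (t u / tall u) * (1 - Bd / (c u * t u)))
    (hpi : pii u ≤ pii w)
    (htall' : tall w ≤ tall u)
    (x : W → ℝ) (hx : DefFeas t c Bd x)
    (y e : W → ℝ) (hfeas : AttFeas tall pii Ba Be y e) :
    ∃ y' e' : W → ℝ, AttFeas tall pii Ba Be y' e' ∧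
      payoff t tall x e ≤ payoff t tall x e' ∧
      (∀ v : W, v ≠ u → v ≠ w → e' v = e v) ∧
      (0 < e' w → e' u = tall u) := by
  classical
  obtain ⟨hy01, he0, heB, hyB, hcap⟩ := hfeas
  by_cases hew : e w ≤ 0
  · exact ⟨y, e, ⟨hy01, he0, heB, hyB, hcap⟩, le_refl _, fun v _ _ => rfl,
      fun h => (h.not_ge hew).elim⟩
  push_neg at hew
  have htallu : 0 < tall u := lt_of_lt_of_le (ht u) (htall u)
  have htallw : 0 < tall w := lt_of_lt_of_le (ht w) (htall w)
  have hyw1 : y w = 1 := by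
    rcases hy01 w with h0 | h1
    · exfalso; have := hcap w; rw [h0, mul_zero] at this; linarith
    · exact h1
  have heu_le : e u ≤ tall u := by
    rcases hy01 u with h0 | h1
    · have := hcap u; rw [h0, mul_zero] at this; linarith
    · have := hcap u; rw [h1, mul_one] at this; linarith
  have heww : e w ≤ tall w := by
    have := hcap w; rw [hyw1, mul_one] at this; linarith
  obtain ⟨a, ha⟩ : ∃ r, r = min (e u + e w) (tall u) := ⟨_, rfl⟩
  obtain ⟨b, hb⟩ : ∃ r, r = e u + e w - a := ⟨_, rfl⟩
  have ha0 : 0 ≤ a := by rw [ha]; exact le_min (by linarith [he0 u]) htallu.le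
  have haeu : e u ≤ a := by rw [ha]; exact le_min (by linarith) heu_le
  have hatall : a ≤ tall u := by rw [ha]; exact min_le_right _ _
  have hb0 : 0 ≤ b := by
    have : a ≤ e u + e w := by rw [ha]; exact min_le_left _ _
    rw [hb]; linarith
  have hbw : b ≤ e w := by rw [hb]; linarith
  have hbtall : 0 < b → a = tall u := by
    intro hbpos
    rcases le_or_gt (e u + e w) (tall u) with hle | hlt
    · exfalso; rw [ha, min_eq_left hle] at hb; rw [hb] at hbpos; linarith
    · rw [ha, min_eq_right hlt.le]
  have hyu1 : 0 < b → y u = 1 := by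
    intro hbpos
    rcases hy01 u with h0 | h1
    · exfalso
      have hcu := hcap u; rw [h0, mul_zero] at hcu
      have heu0 : e u = 0 := le_antisymm hcu (he0 u)
      have hat : a = tall u := hbtall hbpos
      rw [hb, hat, heu0] at hbpos
      linarith
    · exact h1
  obtain ⟨yw', hyw'⟩ : ∃ r : ℝ, r = if 0 < b then 1 else 0 := ⟨_, rfl⟩
  obtain ⟨y', hy'⟩ : ∃ f : W → ℝ, f = Function.update (Function.update y u 1) w yw' := ⟨_, rfl⟩
  obtain ⟨e', he'⟩ : ∃ f : W → ℝ, f = Function.update (Function.update e u a) w b := ⟨_, rfl⟩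
  have he'u : e' u = a := by simp [he', Function.update_of_ne huw]
  have he'w : e' w = b := by simp [he']
  have hy'u : y' u = 1 := by simp [hy', Function.update_of_ne huw]
  have hy'w : y' w = yw' := by simp [hy']
  have he'v : ∀ v, v ≠ u → v ≠ w → e' v = e v := by
    intro v hvu hvw; simp [he', Function.update_of_ne hvw, Function.update_of_ne hvu]
  have hy'v : ∀ v, v ≠ u → v ≠ w → y' v = y v := by
    intro v hvu hvw; simp [hy', Function.update_of_ne hvw, Function.update_of_ne hvu]
  refine ⟨y', e', ⟨?_, ?_, ?_, ?_, ?_⟩, ?_, he'v, ?_⟩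
  · -- y' ∈ {0,1}
    intro v
    rcases eq_or_ne v u with rfl | hvu
    · right; exact hy'u
    rcases eq_or_ne v w with rfl | hvw
    · rw [hy'w, hyw']; split
      · right; rfl
      · left; rfl
    · rw [hy'v v hvu hvw]; exact hy01 v
  · -- e' ≥ 0
    intro v
    rcases eq_or_ne v u with rfl | hvu
    · rw [he'u]; exact ha0
    rcases eq_or_ne v w with rfl | hvw
    · rw [he'w]; exact hb0
    · rw [he'v v hvu hvw]; exact he0 v
  · -- effort budget
    have heq := sum_sub_two e' e u w huw he'v
    rw [heq, he'u, he'w]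
    have hab : (a - e u) + (b - e w) = 0 := by rw [hb]; ring
    linarith
  · -- attack budget
    have heq := sum_sub_two (fun v => pii v * y' v) (fun v => pii v * y v) u w huw
      (fun v hvu hvw => by simp only [hy'v v hvu hvw])
    simp only [hy'u, hy'w, hyw1] at heq
    rw [heq]
    rcases lt_or_ge 0 b with hbpos | hbneg
    · have h1 : y u = 1 := hyu1 hbpos
      have h2 : yw' = 1 := by rw [hyw', if_pos hbpos]
      rw [h1, h2]; linarith
    · have h2 : yw' = 0 := by rw [hyw', if_neg (not_lt.mpr hbneg)]
      rw [h2]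
      have hyu0 : 0 ≤ y u := by rcases hy01 u with h | h <;> rw [h] <;> norm_num
      have hyu1' : y u ≤ 1 := by rcases hy01 u with h | h <;> rw [h] <;> norm_num
      nlinarith [hpii u, hpii w]
  · -- capacity
    intro v
    rcases eq_or_ne v u with rfl | hvu
    · rw [he'u, hy'u, mul_one]; exact hatall
    rcases eq_or_ne v w with rfl | hvw
    · rw [he'w, hy'w, hyw']
      split
      · next hbpos =>
        have hat := hbtall hbpos
        rw [mul_one, hb, hat]
        linarith
      · next hbneg =>
        push_neg at hbneg
        have : b = 0 := le_antisymm hbneg hb0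
        rw [this, mul_zero]
    · rw [he'v v hvu hvw, hy'v v hvu hvw]; exact hcap v
  · -- payoff
    obtain ⟨hx01, hxB⟩ := hx
    have hxu : c u * t u * x u ≤ Bd := by
      refine le_trans ?_ hxB
      refine Finset.single_le_sum (f := fun v => c v * t v * x v) ?_ (Finset.mem_univ u)
      intro v _
      have h1 := (hx01 v).1
      have h2 := (hc v).le
      have h3 := (ht v).le
      positivity
    have hctu : 0 < c u * t u := mul_pos (hc u) (ht u)
    have hxuB : x u ≤ Bd / (c u * t u) := (le_div_iff₀ hctu).mpr (by linarith [hxu])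
    have hku : 0 < t u / tall u := div_pos (ht u) htallu
    have hkw : 0 ≤ t w / tall w := le_of_lt (div_pos (ht w) htallw)
    have hkey : (t w / tall w) * (1 - x w) ≤ (t u / tall u) * (1 - x u) := by
      have h1 : (t w / tall w) * (1 - x w) ≤ t w / tall w :=
        mul_le_of_le_one_right hkw (by linarith [(hx01 w).1])
      have h2 : (t u / tall u) * (1 - Bd / (c u * t u)) ≤ (t u / tall u) * (1 - x u) :=
        mul_le_mul_of_nonneg_left (by linarith) hku.le
      linarith
    have heq := sum_sub_two (fun v => (t v / tall v) * (1 - x v) * e' v)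
      (fun v => (t v / tall v) * (1 - x v) * e v) u w huw
      (fun v hvu hvw => by simp only [he'v v hvu hvw])
    unfold payoff
    rw [heq]
    simp only [he'u, he'w]
    have hprod : 0 ≤ (a - e u) * ((t u / tall u) * (1 - x u) - (t w / tall w) * (1 - x w)) :=
      mul_nonneg (by linarith) (by linarith)
    have key2 : (t u / tall u) * (1 - x u) * a - (t u / tall u) * (1 - x u) * e u +
        ((t w / tall w) * (1 - x w) * b - (t w / tall w) * (1 - x w) * e w) =
        (a - e u) * ((t u / tall u) * (1 - x u) - (t w / tall w) * (1 - x w)) := by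
      rw [hb]; ring
    linarith
  · -- exhaustion
    intro hpos
    rw [he'w] at hpos
    rw [he'u]
    exact hbtall hpos
end

section
/- Correctness of the dominated-website elimination criterion (Algorithm 2): in the SED game, let w ∈ W and let U* ⊆ W \ {w} be a set of websites such that every u ∈ U* satisfies c_u t_u ≥ B_d and κ_w ≤ κ_u(1 − B_d/(c_u t_u)), and additionally ∑_{u∈U*} π_u ≤ π_w, ∑_{u∈U*} t_u^all ≥ t_w^all, and ∑_{u∈U*} t_u^all ≥ B_e. Then for every feasible defender strategy x and every feasible attacker strategy (y,e), there exists a feasible attacker strategy (y',e') with e'_w = 0 and f(x,e') ≥ f(x,e); hence website w can be eliminated without affecting the optimal value of the game. -/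
open Finset

/-- correctness of the dominated-website elimination criterion of
Algorithm 2: if there is a set `U* ⊆ W \ {w}` of websites, each satisfying
`c_u t_u ≥ B_d` and `κ_w ≤ κ_u (1 - B_d/(c_u t_u))`, with `∑_{u∈U*} π_u ≤ π_w`,
`∑_{u∈U*} t_u^all ≥ t_w^all` and `∑_{u∈U*} t_u^all ≥ B_e`, then the attacker never
needs to scan `w`: any feasible attack can be replaced by an equally good one with
`e'_w = 0`. -/
theorem dominated_website_elimination
    {W : Type*} [Fintype W] (t tall c pii : W → ℝ) (Bd Ba Be : ℝ)
    (ht : ∀ w, 0 < t w) (htall : ∀ w, t w ≤ tall w)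
    (hc : ∀ w, 0 < c w) (hpii : ∀ w, 0 < pii w)
    (hBd : 0 ≤ Bd) (hBa : 0 ≤ Ba) (hBe : 0 ≤ Be)
    (w : W) (Ustar : Finset W) (hwU : w ∉ Ustar)
    (hbudget : ∀ u ∈ Ustar, Bd ≤ c u * t u)
    (hkappa : ∀ u ∈ Ustar, (t w / tall w) ≤ (t u / tall u) * (1 - Bd / (c u * t u)))
    (hpi : ∑ u ∈ Ustar, pii u ≤ pii w)
    (htall1 : tall w ≤ ∑ u ∈ Ustar, tall u)
    (htall2 : Be ≤ ∑ u ∈ Ustar, tall u)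
    (x : W → ℝ) (hx : DefFeas t c Bd x)
    (y e : W → ℝ) (hfeas : AttFeas tall pii Ba Be y e) :
    ∃ y' e' : W → ℝ, AttFeas tall pii Ba Be y' e' ∧
      e' w = 0 ∧
      payoff t tall x e ≤ payoff t tall x e' :=  by
  classical
  obtain ⟨hy01, he0, heBe, hpiB, hcap⟩ := hfeas
  obtain ⟨hx01, hxB⟩ := hx
  by_cases hew : e w = 0
  · exact ⟨y, e, ⟨hy01, he0, heBe, hpiB, hcap⟩, hew, le_rfl⟩
  have hew' : 0 < e w := (he0 w).lt_of_ne (Ne.symm hew)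
  have htallpos : ∀ v, 0 < tall v := fun v => (ht v).trans_le (htall v)
  have heub : ∀ v, e v ≤ tall v := by
    intro v
    rcases hy01 v with h | h
    · have h2 := hcap v
      rw [h, mul_zero] at h2
      linarith [(htallpos v).le]
    · have h2 := hcap v
      rw [h, mul_one] at h2
      exact h2
  set R : ℝ := ∑ u ∈ Ustar, (tall u - e u) with hRdef
  have hsumU : ∑ u ∈ Ustar, e u + e w ≤ ∑ v, e v := by
    have h1 : ∑ v ∈ insert w Ustar, e v ≤ ∑ v, e v :=
      Finset.sum_le_sum_of_subset_of_nonneg (Finset.subset_univ _) (fun i _ _ => he0 i)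
    rw [Finset.sum_insert hwU] at h1
    linarith
  have hRsplit : R = ∑ u ∈ Ustar, tall u - ∑ u ∈ Ustar, e u := Finset.sum_sub_distrib _ _
  have hRe : e w ≤ R := by linarith
  have hRpos : 0 < R := lt_of_lt_of_le hew' hRe
  set q : ℝ := e w / R with hqdef
  have hq0 : 0 ≤ q := div_nonneg hew'.le hRpos.le
  have hq1 : q ≤ 1 := (div_le_one hRpos).mpr hRe
  have hRq : R * q = e w := by
    rw [hqdef]; field_simp
  have hyw : y w = 1 := by
    rcases hy01 w with h | h
    · exfalso
      have h2 := hcap w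
      rw [h, mul_zero] at h2
      linarith
    · exact h
  set e' : W → ℝ := fun v => if v = w then 0 else
      if v ∈ Ustar then e v + (tall v - e v) * q else e v with he'def
  set y' : W → ℝ := fun v => if v = w then 0 else
      if v ∈ Ustar then 1 else y v with hy'def
  have he'w : e' w = 0 := by simp [he'def]
  have he'U : ∀ u ∈ Ustar, e' u = e u + (tall u - e u) * q := by
    intro u hu
    have : u ≠ w := fun h => hwU (h ▸ hu)
    simp [he'def, this, hu]
  have he'out : ∀ v, v ≠ w → v ∉ Ustar → e' v = e v := by
    intro v h1 h2; simp [he'def, h1, h2]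
  -- sum of e' equals sum of e
  have hdiff : ∀ v, v ∉ insert w Ustar → e' v - e v = 0 := by
    intro v hv
    rw [Finset.mem_insert] at hv
    push_neg at hv
    rw [he'out v hv.1 hv.2, sub_self]
  have hsumdiff : ∀ (g : W → ℝ), (∑ v, g v * (e' v - e v)) =
      g w * (-(e w)) + ∑ u ∈ Ustar, g u * ((tall u - e u) * q) := by
    intro g
    rw [← Finset.sum_subset (Finset.subset_univ (insert w Ustar))
        (fun v _ hv => by rw [hdiff v hv, mul_zero])]
    rw [Finset.sum_insert hwU, he'w]
    congr 1
    · ring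
    · exact Finset.sum_congr rfl fun u hu => by rw [he'U u hu]; ring
  have hsume : ∑ v, e' v = ∑ v, e v := by
    have h := hsumdiff (fun _ => 1)
    simp only [one_mul] at h
    rw [Finset.sum_sub_distrib] at h
    rw [← Finset.sum_mul] at h
    rw [← hRdef, hRq] at h
    linarith
  -- feasibility of (y', e')
  have hfeas' : AttFeas tall pii Ba Be y' e' := by
    refine ⟨?_, ?_, ?_, ?_, ?_⟩
    · intro v
      by_cases h1 : v = w
      · left; simp [hy'def, h1]
      · by_cases h2 : v ∈ Ustar
        · right; simp [hy'def, h1, h2]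
        · simpa [hy'def, h1, h2] using hy01 v
    · intro v
      by_cases h1 : v = w
      · simp [he'def, h1]
      · by_cases h2 : v ∈ Ustar
        · simp only [he'def, h1, h2, if_false, if_true]
          have := heub v
          have : 0 ≤ (tall v - e v) * q := mul_nonneg (by linarith) hq0
          linarith [he0 v]
        · simpa [he'def, h1, h2] using he0 v
    · rw [hsume]; exact heBe
    · have hterm : ∀ v ∈ Finset.univ, pii v * y' v ≤
          pii v * y v + (if v = w then -(pii w) else if v ∈ Ustar then pii v else 0) := by
        intro v _
        by_cases h1 : v = w
        · subst h1
          simp [hy'def, hyw]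
        · by_cases h2 : v ∈ Ustar
          · simp only [hy'def, h1, h2, if_false, if_true]
            have : 0 ≤ y v := by rcases hy01 v with h | h <;> simp [h]
            nlinarith [(hpii v).le]
          · simp [hy'def, h1, h2]
      have h2 := Finset.sum_le_sum hterm
      rw [Finset.sum_add_distrib] at h2
      have h3 : ∑ v, (if v = w then -(pii w) else if v ∈ Ustar then pii v else 0) =
          -(pii w) + ∑ u ∈ Ustar, pii u := by
        rw [← Finset.sum_subset (Finset.subset_univ (insert w Ustar))
            (fun v _ hv => by
              rw [Finset.mem_insert] at hv
              push_neg at hv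
              simp [hv.1, hv.2])]
        rw [Finset.sum_insert hwU]
        congr 1
        · simp
        · exact Finset.sum_congr rfl fun u hu => by
            have : u ≠ w := fun h => hwU (h ▸ hu)
            simp [this, hu]
      rw [h3] at h2
      calc ∑ v, pii v * y' v ≤ ∑ v, pii v * y v + (-(pii w) + ∑ u ∈ Ustar, pii u) := h2
        _ ≤ ∑ v, pii v * y v := by linarith
        _ ≤ Ba := hpiB
    · intro v
      by_cases h1 : v = w
      · simp [he'def, hy'def, h1]
      · by_cases h2 : v ∈ Ustar
        · simp only [he'def, hy'def, h1, h2, if_false, if_true, mul_one]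
          nlinarith [heub v]
        · simp only [he'def, hy'def, h1, h2, if_false]
          exact hcap v
  -- payoff comparison
  refine ⟨y', e', hfeas', he'w, ?_⟩
  set g : W → ℝ := fun v => t v / tall v * (1 - x v) with hgdef
  have hg0 : ∀ v, 0 ≤ g v := by
    intro v
    have h1 : 0 ≤ t v / tall v := div_nonneg (ht v).le (htallpos v).le
    have h2 := (hx01 v).2
    exact mul_nonneg h1 (by linarith)
  have hgU : ∀ u ∈ Ustar, g w ≤ g u := by
    intro u hu
    have hcu : 0 < c u * t u := mul_pos (hc u) (ht u)
    have hxu : c u * t u * x u ≤ Bd := by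
      have h1 : c u * t u * x u ≤ ∑ v, c v * t v * x v :=
        Finset.single_le_sum (f := fun v => c v * t v * x v)
          (fun v _ => mul_nonneg (mul_nonneg (hc v).le (ht v).le) (hx01 v).1)
          (Finset.mem_univ u)
      linarith
    have hxu2 : x u ≤ Bd / (c u * t u) := (le_div_iff₀ hcu).mpr (by linarith)
    have hk : t u / tall u * (1 - Bd / (c u * t u)) ≤ t u / tall u * (1 - x u) :=
      mul_le_mul_of_nonneg_left (by linarith) (div_nonneg (ht u).le (htallpos u).le)
    have hkw : t w / tall w * (1 - x w) ≤ t w / tall w := by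
      have h1 : 0 ≤ t w / tall w := div_nonneg (ht w).le (htallpos w).le
      nlinarith [(hx01 w).1]
    calc g w = t w / tall w * (1 - x w) := rfl
      _ ≤ t w / tall w := hkw
      _ ≤ t u / tall u * (1 - Bd / (c u * t u)) := hkappa u hu
      _ ≤ g u := hk
  have hpay : payoff t tall x e' - payoff t tall x e = ∑ v, g v * (e' v - e v) := by
    unfold payoff
    rw [← Finset.sum_sub_distrib]
    exact Finset.sum_congr rfl fun v _ => by simp [hgdef]; ring
  have hkey : g w * e w ≤ ∑ u ∈ Ustar, g u * ((tall u - e u) * q) := by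
    have h1 : ∀ u ∈ Ustar, g w * ((tall u - e u) * q) ≤ g u * ((tall u - e u) * q) := by
      intro u hu
      exact mul_le_mul_of_nonneg_right (hgU u hu)
        (mul_nonneg (by linarith [heub u]) hq0)
    calc g w * e w = g w * (R * q) := by rw [hRq]
      _ = ∑ u ∈ Ustar, g w * ((tall u - e u) * q) := by
          rw [← Finset.mul_sum, ← Finset.sum_mul]
      _ ≤ _ := Finset.sum_le_sum h1
  have h := hsumdiff g
  linarith [hpay, hkey, h]
end
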